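/- Let Q be a ⊗-frame. The subset Qⁱᵈᵉᵐ of idempotent elements (those x with x ⋆ x = x) is closed under the product and under arbitrary suprema, hence is a sub-⊗-frame of Q, and Qⁱᵈᵉᵐ is a frame (its product is the binary infimum of Qⁱᵈᵉᵐ). -/
import Mathlib


/-- In a ⊗-frame `Q`, the set of idempotent elements is closed under the product
and under arbitrary suprema (hence is a sub-⊗-frame), and it is a frame: the
product of two idempotents is their binary infimum *computed among idempotents*
(it is an idempotent lower bound of both, greater than every idempotent lower bound). -/
theorem tensor_frame_idempotents_frame {Q : Type*} [CompleteLattice Q] [CommMonoid Q]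
    (hdist : ∀ (a : Q) (S : Set Q), a * sSup S = ⨆ x ∈ S, a * x)
    (hone : (1 : Q) = ⊤) :
    -- closed under the product
    (∀ x y : Q, x * x = x → y * y = y → (x * y) * (x * y) = x * y) ∧
    -- closed under arbitrary suprema
    (∀ S : Set Q, (∀ x ∈ S, x * x = x) → sSup S * sSup S = sSup S) ∧
    -- contains the unit
    ((1 : Q) * 1 = 1) ∧
    -- the product of idempotents is their infimum in the subposet of idempotents
    (∀ x y : Q, x * x = x → y * y = y →
      x * y ≤ x ∧ x * y ≤ y ∧ ∀ z : Q, z * z = z → z ≤ x → z ≤ y → z ≤ x * y) := by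
  -- monotonicity in the right argument
  have hmono : ∀ a x y : Q, x ≤ y → a * x ≤ a * y := by
    intro a x y hxy
    have h : a * sSup {x, y} = ⨆ z ∈ ({x, y} : Set Q), a * z := hdist a {x, y}
    have hs : sSup ({x, y} : Set Q) = y := by
      rw [sSup_pair, sup_eq_right.mpr hxy]
    rw [hs] at h
    rw [h]
    exact le_biSup _ (Set.mem_insert x {y})
  have hmono2 : ∀ a b c d : Q, a ≤ c → b ≤ d → a * b ≤ c * d := by
    intro a b c d h1 h2
    calc a * b ≤ a * d := hmono a b d h2
    _ = d * a := mul_comm a d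
    _ ≤ d * c := hmono d a c h1
    _ = c * d := mul_comm d c
  have hle : ∀ a b : Q, a * b ≤ a := by
    intro a b
    calc a * b ≤ a * 1 := hmono a b 1 (hone ▸ le_top)
    _ = a := mul_one a
  refine ⟨?_, ?_, one_mul 1, ?_⟩
  · intro x y hx hy
    calc (x * y) * (x * y) = (x * x) * (y * y) := mul_mul_mul_comm x y x y
    _ = x * y := by rw [hx, hy]
  · intro S hS
    apply le_antisymm
    · exact hle _ _
    · apply sSup_le
      intro x hx
      calc x = x * x := (hS x hx).symm
      _ ≤ sSup S * sSup S := hmono2 _ _ _ _ (le_sSup hx) (le_sSup hx)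
  · intro x y hx hy
    refine ⟨hle x y, ?_, ?_⟩
    · rw [mul_comm]; exact hle y x
    · intro z hz h1 h2
      calc z = z * z := hz.symm
      _ ≤ x * y := hmono2 _ _ _ _ h1 h2
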